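/- arXiv:2407.17769 — 2 statements merged into one kernel-verified Lean document; each statement's English description precedes it below -/
import Mathlib

section
/- Let q, q₁, q₂ ∈ [1, ∞) and α, α₁, α₂ ∈ [0, ∞) satisfy 1/q = 1/q₁ + 1/q₂ and α/q = α₁/q₁ + α₂/q₂. Then there exists a constant C > 0 such that for all measurable functions f, g on ℝ^N, ‖fg‖_{L^{q,∞}(log L)^α} ≤ C ‖f‖_{L^{q₁,∞}(log L)^{α₁}} ‖g‖_{L^{q₂,∞}(log L)^{α₂}}. -/
open MeasureTheory ENNReal Set

noncomputable def Phi (s : ℝ) : ℝ := Real.log (Real.exp 1 + s)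

/-- The non-increasing rearrangement of `f`, with `inf ∅ = ∞`. -/
noncomputable def rearr {E : Type*} [MeasureSpace E] (f : E → ℝ) (s : ℝ) : ℝ≥0∞ :=
  sInf {l : ℝ≥0∞ | volume {x | l < (‖f x‖₊ : ℝ≥0∞)} ≤ ENNReal.ofReal s}

/-- The weak Zygmund norm `‖f‖_{L^{q,∞}(log L)^α}`. -/
noncomputable def wkNorm {E : Type*} [MeasureSpace E] (f : E → ℝ) (q α : ℝ) : ℝ≥0∞ :=
  ⨆ (s : ℝ) (_ : 0 < s),
    (ENNReal.ofReal s * ENNReal.ofReal (Phi s⁻¹ ^ α) * rearr f s ^ q) ^ (1 / q)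

/-!
The rearrangement is submultiplicative, `(fg)*(2t) ≤ f*(t) g*(t)`, because `|fg| > f*(t) g*(t)`
forces `|f| > f*(t)` or `|g| > g*(t)`, and each of these sets has measure at most `t`.
The weight `s ↦ s^{1/q} Φ(1/s)^{α/q}` then splits along the exponent relations: at `s = 2t`,
`(2t)^{1/q} = 2^{1/q} t^{1/q₁} t^{1/q₂}`, and `Φ(1/(2t)) ≤ Φ(1/t)` with
`Φ(1/t)^{α/q} = Φ(1/t)^{α₁/q₁} Φ(1/t)^{α₂/q₂}`. This gives the bound with `C = 2^{1/q}`.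
-/

lemma one_le_Phi {x : ℝ} (hx : 0 ≤ x) : 1 ≤ Phi x := by
  rw [Phi, Real.le_log_iff_exp_le (by positivity)]
  linarith

lemma Phi_pos {x : ℝ} (hx : 0 ≤ x) : 0 < Phi x :=
  zero_lt_one.trans_le (one_le_Phi hx)

lemma Phi_le_Phi {x y : ℝ} (hx : 0 ≤ x) (hxy : x ≤ y) : Phi x ≤ Phi y :=
  Real.log_le_log (by positivity) (by linarith)

section Rearrangement

variable {E : Type*} [MeasureSpace E]

lemma volume_rearr_lt_le (f : E → ℝ) (s : ℝ) :
    volume {x | rearr f s < (‖f x‖₊ : ℝ≥0∞)} ≤ ENNReal.ofReal s := by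
  set S := {l : ℝ≥0∞ | volume {x | l < (‖f x‖₊ : ℝ≥0∞)} ≤ ENNReal.ofReal s}
  have htop : ⊤ ∈ S := by simp [S]
  -- `rearr f s` is the limit of a decreasing sequence in `S`; continuity from below finishes.
  obtain ⟨u, hu_anti, hu_ge, hu_lim, hu_mem⟩ :=
    (isGLB_sInf S).exists_seq_antitone_tendsto ⟨⊤, htop⟩
  have hunion : {x | rearr f s < (‖f x‖₊ : ℝ≥0∞)} = ⋃ n, {x | u n < (‖f x‖₊ : ℝ≥0∞)} := by
    ext x
    simp only [mem_ofPred_eq, mem_iUnion]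
    refine ⟨fun hx => (hu_lim.eventually (gt_mem_nhds hx)).exists, fun ⟨n, hn⟩ => ?_⟩
    exact (hu_ge n).trans_lt hn
  have hmono : Monotone fun n => {x | u n < (‖f x‖₊ : ℝ≥0∞)} :=
    fun m n hmn x hx => (hu_anti hmn).trans_lt hx
  rw [hunion, hmono.measure_iUnion]
  exact iSup_le hu_mem

lemma rearr_mul_add_le (f g : E → ℝ) {s t : ℝ} (hs : 0 ≤ s) (ht : 0 ≤ t) :
    rearr (fun x => f x * g x) (s + t) ≤ rearr f s * rearr g t := by
  refine sInf_le ?_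
  have hsub : {x | rearr f s * rearr g t < (‖f x * g x‖₊ : ℝ≥0∞)} ⊆
      {x | rearr f s < (‖f x‖₊ : ℝ≥0∞)} ∪ {x | rearr g t < (‖g x‖₊ : ℝ≥0∞)} := by
    intro x hx
    by_contra hc
    simp only [mem_union, mem_ofPred_eq, not_or, not_lt] at hc
    simp only [mem_ofPred_eq, nnnorm_mul, ENNReal.coe_mul] at hx
    exact hx.not_ge (mul_le_mul' hc.1 hc.2)
  calc volume {x | rearr f s * rearr g t < (‖f x * g x‖₊ : ℝ≥0∞)}
      ≤ volume {x | rearr f s < (‖f x‖₊ : ℝ≥0∞)} + volume {x | rearr g t < (‖g x‖₊ : ℝ≥0∞)} :=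
        (measure_mono hsub).trans (measure_union_le _ _)
    _ ≤ ENNReal.ofReal s + ENNReal.ofReal t :=
        add_le_add (volume_rearr_lt_le f s) (volume_rearr_lt_le g t)
    _ = ENNReal.ofReal (s + t) := (ENNReal.ofReal_add hs ht).symm

end Rearrangement

noncomputable def zygmundWeight (q α s : ℝ) : ℝ := s ^ (1 / q) * Phi s⁻¹ ^ (α / q)

lemma zygmundWeight_nonneg (q α : ℝ) {s : ℝ} (hs : 0 ≤ s) : 0 ≤ zygmundWeight q α s :=
  mul_nonneg (Real.rpow_nonneg hs _) (Real.rpow_nonneg (Phi_pos (inv_nonneg.mpr hs)).le _)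

lemma wkNorm_eq_iSup_zygmundWeight_mul {E : Type*} [MeasureSpace E] (f : E → ℝ) {q : ℝ}
    (hq : 0 < q) (α : ℝ) :
    wkNorm f q α = ⨆ (s : ℝ) (_ : 0 < s), ENNReal.ofReal (zygmundWeight q α s) * rearr f s := by
  refine iSup_congr fun s => iSup_congr fun hs => ?_
  have hPhi : 0 ≤ Phi s⁻¹ := (Phi_pos (by positivity)).le
  rw [ENNReal.mul_rpow_of_nonneg _ _ (by positivity), ENNReal.mul_rpow_of_nonneg _ _ (by positivity),
    ← ENNReal.rpow_mul, mul_one_div_cancel hq.ne', ENNReal.rpow_one,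
    ENNReal.ofReal_rpow_of_nonneg hs.le (by positivity),
    ENNReal.ofReal_rpow_of_nonneg (by positivity) (by positivity), ← Real.rpow_mul hPhi,
    mul_one_div, zygmundWeight, ENNReal.ofReal_mul (by positivity)]

lemma zygmundWeight_two_mul_le {q q₁ q₂ α α₁ α₂ t : ℝ} (hq : 0 < q) (hα : 0 ≤ α)
    (hsum : 1 / q = 1 / q₁ + 1 / q₂) (hαsum : α / q = α₁ / q₁ + α₂ / q₂) (ht : 0 < t) :
    zygmundWeight q α (2 * t) ≤ 2 ^ (1 / q) * zygmundWeight q₁ α₁ t * zygmundWeight q₂ α₂ t := by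
  have hPhi_pos : 0 < Phi t⁻¹ := Phi_pos (by positivity)
  have hPhi_le : Phi (2 * t)⁻¹ ≤ Phi t⁻¹ :=
    Phi_le_Phi (by positivity) (inv_anti₀ ht (by linarith))
  calc zygmundWeight q α (2 * t)
      ≤ 2 ^ (1 / q) * t ^ (1 / q) * Phi t⁻¹ ^ (α / q) := by
        rw [zygmundWeight, Real.mul_rpow (by norm_num) ht.le]
        gcongr
        exact (Phi_pos (by positivity)).le
    _ = 2 ^ (1 / q) * zygmundWeight q₁ α₁ t * zygmundWeight q₂ α₂ t := by
        rw [zygmundWeight, zygmundWeight, hsum, hαsum, Real.rpow_add ht, Real.rpow_add hPhi_pos]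
        ring

theorem wkNorm_mul_le {E : Type*} [MeasureSpace E] (f g : E → ℝ) {q q₁ q₂ α α₁ α₂ : ℝ}
    (hq₁ : 0 < q₁) (hq₂ : 0 < q₂) (hα : 0 ≤ α)
    (hsum : 1 / q = 1 / q₁ + 1 / q₂) (hαsum : α / q = α₁ / q₁ + α₂ / q₂) :
    wkNorm (fun x => f x * g x) q α ≤
      ENNReal.ofReal (2 ^ (1 / q)) * wkNorm f q₁ α₁ * wkNorm g q₂ α₂ := by
  have hq : 0 < q := one_div_pos.mp (hsum ▸ by positivity)
  rw [wkNorm_eq_iSup_zygmundWeight_mul _ hq, wkNorm_eq_iSup_zygmundWeight_mul _ hq₁,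
    wkNorm_eq_iSup_zygmundWeight_mul _ hq₂]
  refine iSup₂_le fun s hs => ?_
  obtain ⟨t, ht, rfl⟩ : ∃ t, 0 < t ∧ s = 2 * t := ⟨s / 2, by positivity, by ring⟩
  calc ENNReal.ofReal (zygmundWeight q α (2 * t)) * rearr (fun x => f x * g x) (2 * t)
      ≤ ENNReal.ofReal (2 ^ (1 / q) * zygmundWeight q₁ α₁ t * zygmundWeight q₂ α₂ t) *
          (rearr f t * rearr g t) := by
        gcongr
        · exact zygmundWeight_two_mul_le hq hα hsum hαsum ht
        · exact two_mul t ▸ rearr_mul_add_le f g ht.le ht.le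
    _ = ENNReal.ofReal (2 ^ (1 / q)) * (ENNReal.ofReal (zygmundWeight q₁ α₁ t) * rearr f t) *
          (ENNReal.ofReal (zygmundWeight q₂ α₂ t) * rearr g t) := by
        rw [ENNReal.ofReal_mul (mul_nonneg (by positivity) (zygmundWeight_nonneg q₁ α₁ ht.le)),
          ENNReal.ofReal_mul (by positivity)]
        ring
    _ ≤ _ := by
        gcongr
        · exact le_iSup₂_of_le t ht le_rfl
        · exact le_iSup₂_of_le t ht le_rfl

theorem stmt7_general {N : ℕ} (q q₁ q₂ α α₁ α₂ : ℝ)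
    (hq₁ : 1 ≤ q₁) (hq₂ : 1 ≤ q₂)
    (hα : 0 ≤ α)
    (hsum : 1 / q = 1 / q₁ + 1 / q₂)
    (hαsum : α / q = α₁ / q₁ + α₂ / q₂) :
    ∃ C : ℝ, 0 < C ∧ ∀ f g : (Fin N → ℝ) → ℝ, Measurable f → Measurable g →
      wkNorm (fun x => f x * g x) q α ≤
        ENNReal.ofReal C * wkNorm f q₁ α₁ * wkNorm g q₂ α₂ :=
  ⟨2 ^ (1 / q), by positivity, fun f g _ _ =>
    wkNorm_mul_le f g (by linarith) (by linarith) hα hsum hαsum⟩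

theorem stmt7 {N : ℕ} (q q₁ q₂ α α₁ α₂ : ℝ)
    (hq : 1 ≤ q) (hq₁ : 1 ≤ q₁) (hq₂ : 1 ≤ q₂)
    (hα : 0 ≤ α) (hα₁ : 0 ≤ α₁) (hα₂ : 0 ≤ α₂)
    (hsum : 1 / q = 1 / q₁ + 1 / q₂)
    (hαsum : α / q = α₁ / q₁ + α₂ / q₂) :
    ∃ C : ℝ, 0 < C ∧ ∀ f g : (Fin N → ℝ) → ℝ, Measurable f → Measurable g →
      wkNorm (fun x => f x * g x) q α ≤
        ENNReal.ofReal C * wkNorm f q₁ α₁ * wkNorm g q₂ α₂ :=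
  stmt7_general q q₁ q₂ α α₁ α₂ hq₁ hq₂ hα hsum hαsum
end

section
/- For the critical singular profile μ_c(x) := |x|^{−N} (log(e + 1/|x|))^{−N/θ} on ℝ^N with 0 < θ < N, the restriction μ_c χ_{B(0,1)} satisfies: its non-increasing rearrangement obeys (μ_c χ_{B(0,1)})*(s) = O(s⁻¹ |log s|^{−N/θ}) as s → 0⁺, and ∫₀ˢ (μ_c χ_{B(0,1)})*(τ) dτ = O(|log s|^{−(N−θ)/θ}) as s → 0⁺; consequently μ_c χ_{B(0,1)} belongs to the weak Zygmund space 𝔏^{1,∞}(log 𝔏)^{(N−θ)/θ}. -/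
open MeasureTheory ENNReal Set

/-- The critical singular profile `μ_c(x) = |x|^{-N} (log(e + 1/|x|))^{-N/θ}`. -/
noncomputable def muC (N : ℕ) (θ : ℝ) (x : EuclideanSpace ℝ (Fin N)) : ℝ :=
  ‖x‖ ^ (-(N : ℝ)) * Phi ‖x‖⁻¹ ^ (-((N : ℝ) / θ))

/-- The restriction of `μ_c` to the unit ball, `μ_c χ_{B(0,1)}`. -/
noncomputable def muCball (N : ℕ) (θ : ℝ) : EuclideanSpace ℝ (Fin N) → ℝ :=
  (Metric.ball (0 : EuclideanSpace ℝ (Fin N)) 1).indicator (muC N θ)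

/-!
Write `K = |B(0,1)|`, `p = N/θ` and `L = -log s`. Off the ball of volume `s`, i.e. where
`s ≤ K‖x‖^N`, one has `μ_c(x) ≤ C s⁻¹ L^{-p}`: if moreover `K‖x‖^{2N} ≤ s`, the logarithmic factor
is at least `L/(4N)`; otherwise `‖x‖^{-N} ≤ √(K/s)`, and `√s ≤ (2p)^p L^{-p}`. So the superlevel
set at height `C s⁻¹ L^{-p}` has measure at most `s`, which bounds the rearrangement. Integrating,
`∫₀ˢ τ⁻¹ (-log τ)^{-p} dτ = L^{1-p}/(p-1)` exactly. For the Zygmund quasi-norm, small `s` are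
handled by `log(e + 1/s) ≤ 2L`, large `s` by `∫₀^∞ f* < ∞`, as `f*` vanishes beyond `K`.
-/

open Function Filter Topology

section Rearrangement

variable {E : Type*} [MeasureSpace E] {f : E → ℝ}

lemma rearr_le_ofReal_of_norm_le {S : Set E} {s c : ℝ} (hS : volume S ≤ ENNReal.ofReal s)
    (hf : ∀ x ∉ S, ‖f x‖ ≤ c) : rearr f s ≤ ENNReal.ofReal c := by
  refine sInf_le (le_trans (measure_mono fun x hx => ?_) hS)
  by_contra hxS
  refine (not_lt.2 ?_) hx.out
  rw [← ENNReal.ofReal_coe_nnreal, coe_nnnorm]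
  exact ENNReal.ofReal_le_ofReal (hf x hxS)

lemma rearr_antitone : Antitone (rearr f) := fun _ _ hst =>
  sInf_le_sInf fun _ hl => hl.trans (ENNReal.ofReal_le_ofReal hst)

lemma rearr_eq_zero_of_volume_support_le {s : ℝ}
    (h : volume (support f) ≤ ENNReal.ofReal s) : rearr f s = 0 := by
  simpa using rearr_le_ofReal_of_norm_le (f := f) (c := 0) h fun x hx => by
    simp [notMem_support.1 hx]

lemma lintegral_rearr_Ioi_lt_top {s₁ V : ℝ} (hint : ∫⁻ τ in Ioo 0 s₁, rearr f τ < ∞)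
    (hs₁ : rearr f s₁ < ∞) (hV : volume (support f) ≤ ENNReal.ofReal V) :
    ∫⁻ τ in Ioi 0, rearr f τ < ∞ := by
  have hcover : Ioi (0 : ℝ) ⊆ Ioo 0 s₁ ∪ (Ico s₁ V ∪ Ici V) := by
    intro τ hτ
    by_cases h₁ : τ < s₁
    · exact Or.inl ⟨hτ, h₁⟩
    by_cases h₂ : τ < V
    · exact Or.inr (Or.inl ⟨not_lt.1 h₁, h₂⟩)
    · exact Or.inr (Or.inr (not_lt.1 h₂))
  have hmid : ∫⁻ τ in Ico s₁ V, rearr f τ ≤ rearr f s₁ * volume (Ico s₁ V) :=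
    (setLIntegral_mono measurable_const fun τ hτ => rearr_antitone hτ.1).trans_eq
      (setLIntegral_const _ _)
  have htail : ∫⁻ τ in Ici V, rearr f τ = 0 :=
    (setLIntegral_congr_fun measurableSet_Ici fun τ hτ =>
      rearr_eq_zero_of_volume_support_le (hV.trans (ENNReal.ofReal_le_ofReal hτ))).trans
      lintegral_zero
  calc ∫⁻ τ in Ioi 0, rearr f τ
      ≤ ∫⁻ τ in Ioo 0 s₁ ∪ (Ico s₁ V ∪ Ici V), rearr f τ := lintegral_mono_set hcover
    _ ≤ (∫⁻ τ in Ioo 0 s₁, rearr f τ) +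
        ((∫⁻ τ in Ico s₁ V, rearr f τ) + ∫⁻ τ in Ici V, rearr f τ) :=
      (lintegral_union_le _ _ _).trans (add_le_add le_rfl (lintegral_union_le _ _ _))
    _ < ∞ := by
      rw [htail, add_zero]
      exact ENNReal.add_lt_top.2 ⟨hint, hmid.trans_lt (ENNReal.mul_lt_top hs₁ measure_Ico_lt_top)⟩

end Rearrangement

lemma one_le_Phi_s19 {t : ℝ} (ht : 0 ≤ t) : 1 ≤ Phi t := by
  rw [← Real.log_exp 1]
  exact Real.log_le_log (Real.exp_pos 1) (by linarith)

lemma Phi_pos_s19 {t : ℝ} (ht : 0 ≤ t) : 0 < Phi t :=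
  one_pos.trans_le (one_le_Phi_s19 ht)

lemma log_le_Phi {t : ℝ} (ht : 0 < t) : Real.log t ≤ Phi t :=
  Real.log_le_log ht (by linarith [Real.exp_pos 1])

lemma Phi_mono {a b : ℝ} (ha : 0 ≤ a) (hab : a ≤ b) : Phi a ≤ Phi b :=
  Real.log_le_log (by linarith [Real.exp_pos 1]) (by linarith)

lemma Phi_inv_le_two_mul_neg_log {s : ℝ} (hs : 0 < s) (hse : s ≤ Real.exp (-2)) :
    Phi s⁻¹ ≤ 2 * -Real.log s := by
  have hinv : Real.exp 2 ≤ s⁻¹ := by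
    rw [← inv_inv (Real.exp 2), ← Real.exp_neg]
    exact inv_anti₀ hs hse
  have he2 : Real.exp 1 + 1 ≤ Real.exp 2 := by
    have := Real.add_one_le_exp (1 : ℝ)
    have : Real.exp 2 = Real.exp 1 * Real.exp 1 := by rw [← Real.exp_add]; norm_num
    nlinarith
  have hsq : Real.exp 1 + s⁻¹ ≤ s⁻¹ ^ 2 := by nlinarith [Real.exp_pos 1]
  calc Phi s⁻¹ ≤ Real.log (s⁻¹ ^ 2) := Real.log_le_log (by positivity) hsq
    _ = 2 * -Real.log s := by rw [Real.log_pow, Real.log_inv]; norm_num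

lemma Phi_inv_rpow_mul_neg_log_rpow_neg_le {s b : ℝ} (hs : 0 < s) (hse : s ≤ Real.exp (-2))
    (hb : 0 ≤ b) : Phi s⁻¹ ^ b * (-Real.log s) ^ (-b) ≤ 2 ^ b := by
  have hL : 0 < -Real.log s := neg_pos.2 (Real.log_neg hs (hse.trans_lt (by simp)))
  calc Phi s⁻¹ ^ b * (-Real.log s) ^ (-b) ≤ (2 * -Real.log s) ^ b * (-Real.log s) ^ (-b) := by
        gcongr
        · exact (Phi_pos_s19 (inv_pos.2 hs).le).le
        · exact Phi_inv_le_two_mul_neg_log hs hse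
    _ = 2 ^ b := by
        rw [Real.mul_rpow zero_le_two hL.le, mul_assoc, ← Real.rpow_add hL, add_neg_cancel,
          Real.rpow_zero, mul_one]

lemma sqrt_le_rpow_mul_neg_log_rpow_neg {s p : ℝ} (hs : 0 < s) (hs1 : s < 1) (hp : 0 < p) :
    √s ≤ (2 * p) ^ p * (-Real.log s) ^ (-p) := by
  have hL : 0 < -Real.log s := neg_pos.2 (Real.log_neg hs hs1)
  set q := 2 * p with hq
  have hq0 : 0 < q := by positivity
  have hlog : -Real.log s ≤ q * s ^ (-q⁻¹) := by
    have := Real.log_le_rpow_div (inv_pos.2 hs).le (inv_pos.2 hq0)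
    rwa [Real.log_inv, Real.inv_rpow hs.le, ← Real.rpow_neg hs.le, div_inv_eq_mul, mul_comm] at this
  calc √s = q ^ p * (q * s ^ (-q⁻¹)) ^ (-p) := by
        rw [Real.mul_rpow hq0.le (by positivity), ← Real.rpow_mul hs.le, ← mul_assoc,
          ← Real.rpow_add hq0, add_neg_cancel, Real.rpow_zero, one_mul, Real.sqrt_eq_rpow, hq]
        congr 1
        field_simp
    _ ≤ q ^ p * (-Real.log s) ^ (-p) :=
        mul_le_mul_of_nonneg_left (Real.rpow_le_rpow_of_nonpos hL hlog (by linarith))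
          (by positivity)

section ProfileBound

variable {N p K s r : ℝ}

lemma rpow_neg_mul_Phi_inv_rpow_neg_le_of_rpow_two_mul_le (hN : 0 < N) (hp : 0 ≤ p)
    (hK : 0 < K) (hs : 0 < s) (hs1 : s < 1) (hsK : s ≤ K ^ 2) (hr : 0 < r)
    (hsr : s ≤ K * r ^ N) (hrs : K * r ^ (2 * N) ≤ s) :
    r ^ (-N) * Phi r⁻¹ ^ (-p) ≤ K * (4 * N) ^ p * s⁻¹ * (-Real.log s) ^ (-p) := by
  have hL : 0 < -Real.log s := neg_pos.2 (Real.log_neg hs hs1)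
  have hrN : r ^ (-N) ≤ K * s⁻¹ := by
    rw [Real.rpow_neg hr.le, ← div_eq_mul_inv, le_div_iff₀ hs, inv_mul_le_iff₀ (by positivity)]
    linarith
  have hPhi : -Real.log s / (4 * N) ≤ Phi r⁻¹ := by
    have h1 : Real.log K + 2 * N * Real.log r ≤ Real.log s := by
      have := Real.log_le_log (by positivity) hrs
      rwa [Real.log_mul hK.ne' (by positivity), Real.log_rpow hr] at this
    have h2 : Real.log s ≤ 2 * Real.log K := by
      have := Real.log_le_log hs hsK
      rwa [Real.log_pow, Nat.cast_ofNat] at this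
    calc -Real.log s / (4 * N) ≤ Real.log r⁻¹ := by
          rw [div_le_iff₀ (by positivity), Real.log_inv]
          nlinarith
      _ ≤ Phi r⁻¹ := log_le_Phi (inv_pos.2 hr)
  calc r ^ (-N) * Phi r⁻¹ ^ (-p) ≤ K * s⁻¹ * (-Real.log s / (4 * N)) ^ (-p) :=
        mul_le_mul hrN (Real.rpow_le_rpow_of_nonpos (by positivity) hPhi (by linarith))
          (Real.rpow_nonneg (Phi_pos_s19 (inv_pos.2 hr).le).le _) (by positivity)
    _ = K * (4 * N) ^ p * s⁻¹ * (-Real.log s) ^ (-p) := by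
        rw [Real.div_rpow hL.le (by positivity), Real.rpow_neg (by positivity : (0 : ℝ) ≤ 4 * N),
          div_inv_eq_mul]
        ring

lemma rpow_neg_mul_Phi_inv_rpow_neg_le_of_le_rpow_two_mul (hp : 0 < p) (hK : 0 < K)
    (hs : 0 < s) (hs1 : s < 1) (hr : 0 < r) (hrs : s ≤ K * r ^ (2 * N)) :
    r ^ (-N) * Phi r⁻¹ ^ (-p) ≤ √K * (2 * p) ^ p * s⁻¹ * (-Real.log s) ^ (-p) := by
  have hPhi : Phi r⁻¹ ^ (-p) ≤ 1 :=
    Real.rpow_le_one_of_one_le_of_nonpos (one_le_Phi_s19 (inv_pos.2 hr).le) (by linarith)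
  have hsqrt : √s ≤ √K * r ^ N := by
    rw [← Real.sqrt_sq (by positivity : 0 ≤ r ^ N), ← Real.sqrt_mul hK.le, ← Real.rpow_two,
      ← Real.rpow_mul hr.le, mul_comm N]
    exact Real.sqrt_le_sqrt hrs
  have hrN : r ^ (-N) ≤ √K * √s * s⁻¹ := by
    rw [Real.rpow_neg hr.le, inv_le_iff_one_le_mul₀ (by positivity)]
    calc 1 = √s * √s * s⁻¹ := by rw [Real.mul_self_sqrt hs.le, mul_inv_cancel₀ hs.ne']
      _ ≤ √K * r ^ N * √s * s⁻¹ := by gcongr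
      _ = √K * √s * s⁻¹ * r ^ N := by ring
  calc r ^ (-N) * Phi r⁻¹ ^ (-p) ≤ √K * √s * s⁻¹ * 1 :=
        mul_le_mul hrN hPhi (Real.rpow_nonneg (Phi_pos_s19 (inv_pos.2 hr).le).le _) (by positivity)
    _ ≤ √K * ((2 * p) ^ p * (-Real.log s) ^ (-p)) * s⁻¹ := by
        rw [mul_one]; gcongr; exact sqrt_le_rpow_mul_neg_log_rpow_neg hs hs1 hp
    _ = √K * (2 * p) ^ p * s⁻¹ * (-Real.log s) ^ (-p) := by ring

lemma rpow_neg_mul_Phi_inv_rpow_neg_le (hN : 0 < N) (hp : 0 < p) (hK : 0 < K) (hs : 0 < s)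
    (hs1 : s < 1) (hsK : s ≤ K ^ 2) (hr : 0 < r) (hsr : s ≤ K * r ^ N) :
    r ^ (-N) * Phi r⁻¹ ^ (-p) ≤
      (K * (4 * N) ^ p + √K * (2 * p) ^ p) * s⁻¹ * (-Real.log s) ^ (-p) := by
  have hL : 0 < -Real.log s := neg_pos.2 (Real.log_neg hs hs1)
  have hnonneg : ∀ a : ℝ, 0 ≤ a → 0 ≤ a * s⁻¹ * (-Real.log s) ^ (-p) := fun a ha => by
    positivity
  rcases le_total (K * r ^ (2 * N)) s with hnear | hfar
  · calc _ ≤ K * (4 * N) ^ p * s⁻¹ * (-Real.log s) ^ (-p) :=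
          rpow_neg_mul_Phi_inv_rpow_neg_le_of_rpow_two_mul_le hN hp.le hK hs hs1 hsK hr hsr hnear
      _ ≤ _ := by
          rw [add_mul, add_mul]
          exact le_add_of_nonneg_right (hnonneg _ (by positivity))
  · calc _ ≤ √K * (2 * p) ^ p * s⁻¹ * (-Real.log s) ^ (-p) :=
          rpow_neg_mul_Phi_inv_rpow_neg_le_of_le_rpow_two_mul hp hK hs hs1 hr hfar
      _ ≤ _ := by
          rw [add_mul, add_mul]
          exact le_add_of_nonneg_left (hnonneg _ (by positivity))

end ProfileBound

section LogIntegral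

variable {C b s : ℝ}

lemma hasDerivAt_neg_log_rpow_neg {τ : ℝ} (hb : b ≠ 0) (hτ : 0 < τ) (hτ1 : τ < 1) :
    HasDerivAt (fun t => C / b * (-Real.log t) ^ (-b))
      (C * τ⁻¹ * (-Real.log τ) ^ (-(b + 1))) τ := by
  have hL : 0 < -Real.log τ := neg_pos.2 (Real.log_neg hτ hτ1)
  have h : HasDerivAt (fun t => C / b * (-Real.log t) ^ (-b))
      (C / b * (-b * (-Real.log τ) ^ (-b - 1) * -τ⁻¹)) τ :=
    ((Real.hasDerivAt_rpow_const (Or.inl hL.ne')).comp τ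
      (Real.hasDerivAt_log hτ.ne').neg).const_mul (C / b)
  convert h using 1
  rw [show -b - 1 = -(b + 1) by ring]
  field_simp

lemma continuousOn_neg_log_rpow_neg (hb : 0 < b) (hs1 : s < 1) :
    ContinuousOn (fun t => (-Real.log t) ^ (-b)) (Icc 0 s) := by
  intro τ hτ
  rcases hτ.1.eq_or_lt with rfl | hτ0
  · have hlim : Tendsto (fun t => (-Real.log t) ^ (-b)) (𝓝[>] 0) (𝓝 0) :=
      (tendsto_rpow_neg_atTop hb).comp (tendsto_neg_atBot_atTop.comp Real.tendsto_log_nhdsGT_zero)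
    refine (continuousWithinAt_Ioi_iff_Ici.1 ?_).mono fun t ht => ht.1
    simpa [ContinuousWithinAt, Real.zero_rpow (neg_ne_zero.2 hb.ne')] using hlim
  · have hL : 0 < -Real.log τ := neg_pos.2 (Real.log_neg hτ0 (hτ.2.trans_lt hs1))
    exact ((Real.continuousAt_log hτ0.ne').neg.rpow_const (Or.inl hL.ne')).continuousWithinAt

lemma setLIntegral_Ioo_inv_mul_neg_log_rpow (hC : 0 ≤ C) (hb : 0 < b) (hs : 0 ≤ s) (hs1 : s < 1) :
    ∫⁻ τ in Ioo 0 s, ENNReal.ofReal (C * τ⁻¹ * (-Real.log τ) ^ (-(b + 1))) =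
      ENNReal.ofReal (C / b * (-Real.log s) ^ (-b)) := by
  set F : ℝ → ℝ := fun t => C / b * (-Real.log t) ^ (-b)
  set g : ℝ → ℝ := fun τ => C * τ⁻¹ * (-Real.log τ) ^ (-(b + 1))
  have hF : ContinuousOn F (Icc 0 s) :=
    continuousOn_const.mul (continuousOn_neg_log_rpow_neg hb hs1)
  have hderiv : ∀ τ ∈ Ioo 0 s, HasDerivAt F (g τ) τ := fun τ hτ =>
    hasDerivAt_neg_log_rpow_neg hb.ne' hτ.1 (hτ.2.trans hs1)
  have hg : ∀ τ ∈ Ioo 0 s, 0 ≤ g τ := fun τ hτ => by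
    have := Real.rpow_nonneg (neg_nonneg.2 (Real.log_nonpos hτ.1.le (hτ.2.trans hs1).le)) (-(b + 1))
    have := hτ.1
    positivity
  have hint : IntegrableOn g (Ioc 0 s) := intervalIntegral.integrableOn_deriv_of_nonneg hF hderiv hg
  rw [← ofReal_integral_eq_lintegral_ofReal (hint.mono_set Ioo_subset_Ioc_self)
    ((ae_restrict_iff' measurableSet_Ioo).2 (Eventually.of_forall hg)),
    ← integral_Ioc_eq_integral_Ioo, ← intervalIntegral.integral_of_le hs,
    intervalIntegral.integral_eq_sub_of_hasDerivAt_of_le hs hF hderiv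
      ((intervalIntegrable_iff_integrableOn_Ioc_of_le hs).2 hint)]
  simp [F, Real.zero_rpow (neg_ne_zero.2 hb.ne')]

end LogIntegral

lemma iSup_Phi_inv_rpow_mul_lt_top {I : ℝ → ℝ≥0∞} {b C s₀ : ℝ} {M : ℝ≥0∞} (hb : 0 ≤ b)
    (hC : 0 ≤ C) (hs₀ : 0 < s₀)
    (hI : ∀ s, 0 < s → s < s₀ → I s ≤ ENNReal.ofReal (C * (-Real.log s) ^ (-b)))
    (hM : ∀ s, I s ≤ M) (hMtop : M < ∞) :
    (⨆ (s : ℝ) (_ : 0 < s), ENNReal.ofReal (Phi s⁻¹ ^ b) * I s) < ∞ := by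
  set s₁ := min s₀ (Real.exp (-2))
  have hs₁ : 0 < s₁ := lt_min hs₀ (Real.exp_pos _)
  refine lt_of_le_of_lt (b := ENNReal.ofReal (2 ^ b * C) + ENNReal.ofReal (Phi s₁⁻¹ ^ b) * M)
    (iSup₂_le fun s hs => ?_) (ENNReal.add_lt_top.2 ⟨ENNReal.ofReal_lt_top,
      ENNReal.mul_lt_top ENNReal.ofReal_lt_top hMtop⟩)
  have hPhi : 0 ≤ Phi s⁻¹ ^ b := Real.rpow_nonneg (Phi_pos_s19 (inv_pos.2 hs).le).le _
  rcases lt_or_ge s s₁ with hss | hss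
  · refine le_add_right ?_
    calc ENNReal.ofReal (Phi s⁻¹ ^ b) * I s
        ≤ ENNReal.ofReal (Phi s⁻¹ ^ b) * ENNReal.ofReal (C * (-Real.log s) ^ (-b)) := by
          gcongr; exact hI s hs (hss.trans_le (min_le_left _ _))
      _ = ENNReal.ofReal (Phi s⁻¹ ^ b * (-Real.log s) ^ (-b) * C) := by
          rw [← ENNReal.ofReal_mul hPhi]; ring_nf
      _ ≤ ENNReal.ofReal (2 ^ b * C) := ENNReal.ofReal_le_ofReal <| mul_le_mul_of_nonneg_right
          (Phi_inv_rpow_mul_neg_log_rpow_neg_le hs (hss.le.trans (min_le_right _ _)) hb) hC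
  · refine le_add_left (mul_le_mul' (ENNReal.ofReal_le_ofReal ?_) (hM s))
    exact Real.rpow_le_rpow (Phi_pos_s19 (inv_pos.2 hs).le).le
      (Phi_mono (inv_pos.2 hs).le (inv_anti₀ hs₁ hss)) hb

noncomputable def unitBallVolume (N : ℕ) : ℝ :=
  (volume (Metric.ball (0 : EuclideanSpace ℝ (Fin N)) 1)).toReal

section Profile

variable {N : ℕ} {θ : ℝ}

lemma unitBallVolume_pos : 0 < unitBallVolume N :=
  ENNReal.toReal_pos (Metric.measure_ball_pos _ _ one_pos).ne' measure_ball_lt_top.ne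

lemma volume_ball_zero_eq {r : ℝ} (hr : 0 < r) :
    volume (Metric.ball (0 : EuclideanSpace ℝ (Fin N)) r) =
      ENNReal.ofReal (unitBallVolume N * r ^ N) := by
  rw [Measure.addHaar_ball_of_pos _ _ hr, finrank_euclideanSpace_fin, unitBallVolume,
    ENNReal.ofReal_mul ENNReal.toReal_nonneg, ENNReal.ofReal_toReal measure_ball_lt_top.ne,
    mul_comm]

lemma volume_support_muCball_le :
    volume (support (muCball N θ)) ≤ ENNReal.ofReal (unitBallVolume N) := by
  refine (measure_mono (support_indicator_subset)).trans_eq ?_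
  simpa using volume_ball_zero_eq (N := N) one_pos

lemma muC_nonneg (x : EuclideanSpace ℝ (Fin N)) : 0 ≤ muC N θ x :=
  mul_nonneg (Real.rpow_nonneg (norm_nonneg x) _)
    (Real.rpow_nonneg (Phi_pos_s19 (by positivity)).le _)

theorem exists_rearr_muCball_le (hN : 0 < N) (hθ : 0 < θ) :
    ∃ C > 0, ∃ s₀ > 0, s₀ ≤ 1 ∧ ∀ s, 0 < s → s < s₀ →
      rearr (muCball N θ) s ≤ ENNReal.ofReal (C * s⁻¹ * (-Real.log s) ^ (-((N : ℝ) / θ))) := by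
  set K := unitBallVolume N
  set p := (N : ℝ) / θ
  have hK : 0 < K := unitBallVolume_pos
  have hN' : (0 : ℝ) < N := Nat.cast_pos.2 hN
  have hp : 0 < p := div_pos hN' hθ
  refine ⟨K * (4 * N) ^ p + √K * (2 * p) ^ p, by positivity, min 1 (K ^ 2), by positivity,
    min_le_left _ _, fun s hs hss => ?_⟩
  have hs1 : s < 1 := hss.trans_le (min_le_left _ _)
  have hsK : s ≤ K ^ 2 := hss.le.trans (min_le_right _ _)
  set ρ := (s / K) ^ (N : ℝ)⁻¹
  have hρ : 0 < ρ := by positivity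
  have hρN : K * ρ ^ N = s := by
    rw [← Real.rpow_natCast, ← Real.rpow_mul (by positivity), inv_mul_cancel₀ hN'.ne',
      Real.rpow_one, mul_div_cancel₀ _ hK.ne']
  refine rearr_le_ofReal_of_norm_le (S := Metric.ball 0 ρ) (volume_ball_zero_eq hρ ▸ hρN ▸ le_rfl)
    fun x hx => ?_
  rw [Metric.mem_ball, dist_zero_right, not_lt] at hx
  by_cases hx1 : x ∈ Metric.ball 0 1
  · rw [muCball, indicator_of_mem hx1, Real.norm_of_nonneg (muC_nonneg x)]
    refine rpow_neg_mul_Phi_inv_rpow_neg_le hN' hp hK hs hs1 hsK (hρ.trans_le hx) ?_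
    rw [Real.rpow_natCast, ← hρN]
    gcongr
  · rw [muCball, indicator_of_notMem hx1, norm_zero]
    have : 0 ≤ (-Real.log s) ^ (-p) :=
      Real.rpow_nonneg (neg_nonneg.2 (Real.log_nonpos hs.le hs1.le)) _
    positivity

end Profile

theorem stmt19 (N : ℕ) (θ : ℝ) (hθ0 : 0 < θ) (hθN : θ < N) :
    (∃ C : ℝ, 0 < C ∧ ∃ s₀ : ℝ, 0 < s₀ ∧ ∀ s : ℝ, 0 < s → s < s₀ →
      rearr (muCball N θ) s ≤
        ENNReal.ofReal (C * s⁻¹ * |Real.log s| ^ (-((N : ℝ) / θ))) ∧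
      (∫⁻ τ in Set.Ioo (0 : ℝ) s, rearr (muCball N θ) τ) ≤
        ENNReal.ofReal (C * |Real.log s| ^ (-(((N : ℝ) - θ) / θ)))) ∧
    (⨆ (s : ℝ) (_ : 0 < s),
        ENNReal.ofReal (Phi s⁻¹ ^ (((N : ℝ) - θ) / θ)) *
          ∫⁻ τ in Set.Ioo (0 : ℝ) s, rearr (muCball N θ) τ) < ∞ := by
  have hN : 0 < N := Nat.cast_pos.1 (hθ0.trans hθN)
  set b := ((N : ℝ) - θ) / θ
  have hb : 0 < b := div_pos (sub_pos.2 hθN) hθ0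
  have hbp : -(b + 1) = -((N : ℝ) / θ) := by simp only [b]; field_simp; ring
  obtain ⟨C, hC, s₀, hs₀, hs₀1, hrearr⟩ := exists_rearr_muCball_le hN hθ0
  have hint : ∀ s, 0 < s → s < s₀ →
      ∫⁻ τ in Ioo 0 s, rearr (muCball N θ) τ ≤ ENNReal.ofReal (C / b * (-Real.log s) ^ (-b)) :=
    fun s hs hss => by
      rw [← setLIntegral_Ioo_inv_mul_neg_log_rpow hC.le hb hs.le (hss.trans_le hs₀1), hbp]
      exact setLIntegral_mono' measurableSet_Ioo fun τ hτ => hrearr τ hτ.1 (hτ.2.trans hss)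
  refine ⟨⟨C + C / b, by positivity, s₀, hs₀, fun s hs hss => ?_⟩, ?_⟩
  · have hL : 0 ≤ -Real.log s := neg_nonneg.2 (Real.log_nonpos hs.le (hss.trans_le hs₀1).le)
    have hLp := Real.rpow_nonneg hL (-((N : ℝ) / θ))
    have hLb := Real.rpow_nonneg hL (-b)
    rw [abs_of_nonpos (neg_nonneg.1 hL)]
    exact ⟨(hrearr s hs hss).trans (by gcongr; linarith [div_pos hC hb]),
      (hint s hs hss).trans (by gcongr; linarith)⟩
  · have htotal := lintegral_rearr_Ioi_lt_top
      ((hint (s₀ / 2) (by positivity) (by linarith)).trans_lt ENNReal.ofReal_lt_top)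
      ((hrearr (s₀ / 2) (by positivity) (by linarith)).trans_lt ENNReal.ofReal_lt_top)
      volume_support_muCball_le
    exact iSup_Phi_inv_rpow_mul_lt_top hb.le (div_pos hC hb).le hs₀ hint
      (fun s => lintegral_mono_set Ioo_subset_Ioi_self) htotal
end
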